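/- arXiv:2405.20677 — 8 statements merged into one kernel-verified Lean document; each statement's English description precedes it below -/
import Mathlib

section
/- Let K be a positive integer, Y a nonempty type, and f : Fin K → ℝ with 0 ≤ f(a) ≤ 1 for every a and 0 < Σ_a f(a) < K. Let q₀, q₁ be probability mass functions on Y and let φ : Y → {0,1} satisfy φ(y) = 1 for every y in the support of q₁ and φ(y) = 0 for every y in the support of q₀. Define the joint probability mass function P on (Fin K) × Y by P(a, y) = (1/K)·(f(a)·q₁(y) + (1 − f(a))·q₀(y)). Then for every y ∈ Y whose marginal probability P_Y(y) = Σ_{a'} P(a', y) is positive and every a ∈ Fin K, the conditional probability P(a, y)/P_Y(y) equals f(a)·φ(y)/(Σ_{a'} f(a')) + (1 − f(a))·(1 − φ(y))/(K − Σ_{a'} f(a')). -/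
open scoped BigOperators

/-- **Inverse kinematics posterior formula (Lemma 1).** -/
theorem stmt_0 (K : ℕ) (hK : 0 < K) (Y : Type*) [Nonempty Y]
    (f : Fin K → ℝ) (hf : ∀ a, 0 ≤ f a ∧ f a ≤ 1)
    (hS0 : 0 < ∑ a, f a) (hSK : ∑ a, f a < K)
    (q₀ q₁ : Y → ℝ) (hq₀ : ∀ y, 0 ≤ q₀ y) (hq₁ : ∀ y, 0 ≤ q₁ y)
    (hq₀sum : ∑' y, q₀ y = 1) (hq₁sum : ∑' y, q₁ y = 1)
    (φ : Y → ℝ) (hφ01 : ∀ y, φ y = 0 ∨ φ y = 1)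
    (hφ1 : ∀ y, q₁ y ≠ 0 → φ y = 1) (hφ0 : ∀ y, q₀ y ≠ 0 → φ y = 0)
    (P : Fin K × Y → ℝ)
    (hP : ∀ a y, P (a, y) = (1 / K) * (f a * q₁ y + (1 - f a) * q₀ y)) :
    ∀ y : Y, 0 < ∑ a', P (a', y) → ∀ a : Fin K,
      P (a, y) / (∑ a', P (a', y)) =
        f a * φ y / (∑ a', f a') + (1 - f a) * (1 - φ y) / (K - ∑ a', f a') := by
  intro y hy a
  have hKne : (K : ℝ) ≠ 0 := by positivity
  rcases hφ01 y with h0 | h1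
  · -- φ y = 0, so q₁ y = 0
    have hq1 : q₁ y = 0 := by
      by_contra h
      have := hφ1 y h
      rw [h0] at this; norm_num at this
    have hsum : ∑ a', P (a', y) = (1 / K) * ((K - ∑ a', f a') * q₀ y) := by
      simp only [hP, hq1, mul_zero, zero_add, ← Finset.mul_sum]
      congr 1
      simp only [sub_mul, Finset.sum_sub_distrib, Finset.sum_const, Finset.card_univ,
        Fintype.card_fin, nsmul_eq_mul, ← Finset.sum_mul, one_mul]
    have hq0pos : 0 < q₀ y := by
      rcases lt_or_eq_of_le (hq₀ y) with h | h
      · exact h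
      · exfalso; rw [hsum, ← h] at hy; simp at hy
    have hKS : (0:ℝ) < (K : ℝ) - ∑ a', f a' := by linarith
    rw [hP, hsum, hq1, h0]
    field_simp
    ring
  · -- φ y = 1, so q₀ y = 0
    have hq0 : q₀ y = 0 := by
      by_contra h
      have := hφ0 y h
      rw [h1] at this; norm_num at this
    have hsum : ∑ a', P (a', y) = (1 / K) * ((∑ a', f a') * q₁ y) := by
      simp only [hP, hq0]
      rw [← Finset.mul_sum]
      congr 1
      rw [Finset.sum_mul]
      simp
    have hq1pos : 0 < q₁ y := by
      rcases lt_or_eq_of_le (hq₁ y) with h | h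
      · exact h
      · exfalso; rw [hsum, ← h] at hy; simp at hy
    have hKS : (0:ℝ) < (K : ℝ) - ∑ a', f a' := by linarith
    rw [hP, hsum, hq0, h1]
    field_simp
    ring
end

section
/- Fix an integer K ≥ 2 and reals α, θ with 0 < α < K/2 and θ > α/(K − α). Let f : Fin K → ℝ satisfy 0 ≤ f(a) ≤ 1 for every a, Σ_a f(a) ≤ α, and max_a f(a) ≥ θ. Let r ∈ {0,1}, set S = Σ_a f(a), and for each a define h_a = f(a)·r/S + (1 − f(a))·(1 − r)/(K − S). Then for every a* ∈ Fin K with f(a*) ≥ θ (in particular for a* = argmax_a f(a)), one has r = 𝟙{h_{a*} ≥ θ/α}. -/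
open scoped BigOperators

/-- **Second bullet of Lemma 2.** The thresholded inverse-kinematics value exactly
recovers the realized binary reward at any action whose mean reward is at least θ. -/
theorem stmt_2 (K : ℕ) (hK : 2 ≤ K) (α θ : ℝ)
    (hα0 : 0 < α) (hαK : α < K / 2) (hθ : θ > α / (K - α))
    (f : Fin K → ℝ) (hf : ∀ a, 0 ≤ f a ∧ f a ≤ 1)
    (hfα : ∑ a, f a ≤ α) (hfθ : ∃ a, θ ≤ f a)
    (r : ℝ) (hr : r = 0 ∨ r = 1)
    (S : ℝ) (hS : S = ∑ a, f a)
    (h : Fin K → ℝ)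
    (hh : ∀ a, h a = f a * r / S + (1 - f a) * (1 - r) / (K - S)) :
    ∀ astar : Fin K, θ ≤ f astar → r = (if θ / α ≤ h astar then (1 : ℝ) else 0) := by
  intro astar hstar
  have hK2 : (2:ℝ) ≤ K := by exact_mod_cast hK
  have hKα : (0:ℝ) < (K:ℝ) - α := by nlinarith
  have hθ0 : 0 < θ := lt_trans (div_pos hα0 hKα) hθ
  have hSpos : 0 < S := by
    have : f astar ≤ S := by
      rw [hS]
      exact Finset.single_le_sum (fun a _ => (hf a).1) (Finset.mem_univ astar)
    linarith
  have hSα : S ≤ α := hS ▸ hfα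
  have hKS : 0 < (K:ℝ) - S := by linarith
  have hfs0 : 0 ≤ f astar := (hf astar).1
  have hfs1 : f astar ≤ 1 := (hf astar).2
  rcases hr with hr | hr
  · -- r = 0
    have hha : h astar = (1 - f astar) / ((K:ℝ) - S) := by
      rw [hh astar, hr]; ring
    have h1 : h astar ≤ 1 / ((K:ℝ) - α) :=
      hha ▸ div_le_div₀ one_pos.le (by linarith) hKα (by linarith)
    have h2 : 1 / ((K:ℝ) - α) < θ / α := by
      rw [div_lt_div_iff₀ hKα hα0]
      have := (div_lt_iff₀ hKα).mp hθ
      linarith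
    rw [hr, if_neg (by linarith)]
  · -- r = 1
    have hha : h astar = f astar / S := by
      rw [hh astar, hr]; ring
    have h1 : θ / α ≤ h astar :=
      hha ▸ div_le_div₀ hfs0 hstar hSpos hSα
    rw [hr, if_pos h1]
end

section
/- Fix an integer K ≥ 2 and reals α, θ with 0 < α < K/2 and θ > α/(K − α). Let f : Fin K → ℝ satisfy 0 ≤ f(a) ≤ 1 for every a, Σ_a f(a) ≤ α, and max_a f(a) ≥ θ. Let r ∈ {0,1}, set S = Σ_a f(a), and for each a define h_a = f(a)·r/S + (1 − f(a))·(1 − r)/(K − S). Set σ = (1/2)·(θ/α − 1/(K − α)). Then σ > 0, and for every a ∈ Fin K: r ≥ G(h_a, θ/α − σ, σ), where G(v, β, σ) = 0 if v < β, G(v, β, σ) = (v − β)/σ if β ≤ v < β + σ, and G(v, β, σ) = 1 if v ≥ β + σ. -/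
open scoped BigOperators

/-- The Lipschitz surrogate `G(v, β, σ)` of the indicator `𝟙{v ≥ β + σ}`:
`G(v, β, σ) = 0` if `v < β`, `(v − β)/σ` if `β ≤ v < β + σ`, and `1` if `v ≥ β + σ`. -/
noncomputable def G (v β σ : ℝ) : ℝ :=
  if v < β then 0 else if v < β + σ then (v - β) / σ else 1

/-- **First bullet of Lemma 4.** The Lipschitz reward estimator evaluated at the true
inverse-kinematics vector underestimates the realized binary reward at every action. -/
theorem stmt_4 (K : ℕ) (hK : 2 ≤ K) (α θ : ℝ)
    (hα0 : 0 < α) (hαK : α < K / 2) (hθ : θ > α / (K - α))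
    (f : Fin K → ℝ) (hf : ∀ a, 0 ≤ f a ∧ f a ≤ 1)
    (hfα : ∑ a, f a ≤ α) (hfθ : ∃ a, θ ≤ f a)
    (r : ℝ) (hr : r = 0 ∨ r = 1)
    (S : ℝ) (hS : S = ∑ a, f a)
    (h : Fin K → ℝ)
    (hh : ∀ a, h a = f a * r / S + (1 - f a) * (1 - r) / (K - S))
    (σ : ℝ) (hσdef : σ = (1 / 2) * (θ / α - 1 / (K - α))) :
    0 < σ ∧ ∀ a : Fin K, G (h a) (θ / α - σ) σ ≤ r := by
  have hK2 : (2:ℝ) ≤ K := by exact_mod_cast hK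
  have hKα : (0:ℝ) < K - α := by nlinarith
  have h1 : α < θ * ((K:ℝ) - α) := (div_lt_iff₀ hKα).mp hθ
  have hθα : 1 / ((K:ℝ) - α) < θ / α := by
    rw [div_lt_div_iff₀ hKα hα0]; linarith
  have hσ : 0 < σ := by rw [hσdef]; linarith
  refine ⟨hσ, fun a => ?_⟩
  rcases hr with hr0 | hr1
  · -- r = 0 : show h a < β so G = 0
    have hSα : S ≤ α := by rw [hS]; exact hfα
    have hKS : (0:ℝ) < K - S := by linarith
    have hfa0 := (hf a).1
    have hha : h a = (1 - f a) / ((K:ℝ) - S) := by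
      rw [hh a, hr0]; ring
    have hle : (1 - f a) / ((K:ℝ) - S) ≤ 1 / ((K:ℝ) - α) :=
      div_le_div₀ zero_le_one (by linarith) hKα (by linarith)
    have hlt : h a < θ / α - σ := by
      rw [hha, hσdef]; nlinarith
    rw [hr0, G, if_pos hlt]
  · -- r = 1 : G ≤ 1 always
    rw [hr1, G]
    split_ifs with h1' h2'
    · norm_num
    · rw [div_le_one hσ]; linarith
    · exact le_refl 1
end

section
/- Fix an integer K ≥ 2 and reals α, θ with 0 < α < K/2 and θ > α/(K − α). Let f : Fin K → ℝ satisfy 0 ≤ f(a) ≤ 1 for every a, Σ_a f(a) ≤ α, and max_a f(a) ≥ θ. Let r ∈ {0,1}, set S = Σ_a f(a), and for each a define h_a = f(a)·r/S + (1 − f(a))·(1 − r)/(K − S). Set σ = (1/2)·(θ/α − 1/(K − α)). Then for every a* ∈ Fin K with f(a*) ≥ θ (in particular for a* = argmax_a f(a)): r = G(h_{a*}, θ/α − σ, σ), where G(v, β, σ) = 0 if v < β, G(v, β, σ) = (v − β)/σ if β ≤ v < β + σ, and G(v, β, σ) = 1 if v ≥ β + σ. -/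
open scoped BigOperators

/-- **Second bullet of Lemma 4.** The Lipschitz reward estimator evaluated at the true
inverse-kinematics vector exactly equals the realized binary reward at any action whose
mean reward is at least θ. -/
theorem stmt_5 (K : ℕ) (hK : 2 ≤ K) (α θ : ℝ)
    (hα0 : 0 < α) (hαK : α < K / 2) (hθ : θ > α / (K - α))
    (f : Fin K → ℝ) (hf : ∀ a, 0 ≤ f a ∧ f a ≤ 1)
    (hfα : ∑ a, f a ≤ α) (hfθ : ∃ a, θ ≤ f a)
    (r : ℝ) (hr : r = 0 ∨ r = 1)
    (S : ℝ) (hS : S = ∑ a, f a)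
    (h : Fin K → ℝ)
    (hh : ∀ a, h a = f a * r / S + (1 - f a) * (1 - r) / (K - S))
    (σ : ℝ) (hσdef : σ = (1 / 2) * (θ / α - 1 / (K - α))) :
    ∀ astar : Fin K, θ ≤ f astar → r = G (h astar) (θ / α - σ) σ := by
  intro a ha
  have hK2 : (2:ℝ) ≤ (K:ℝ) := by exact_mod_cast hK
  have hKa : (0:ℝ) < (K:ℝ) - α := by nlinarith
  have hθ0 : 0 < θ := lt_trans (div_pos hα0 hKa) hθ
  have hSa : θ ≤ S := by
    rw [hS]
    calc θ ≤ f a := ha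
    _ ≤ ∑ b, f b := Finset.single_le_sum (fun b _ => (hf b).1) (Finset.mem_univ a)
  have hS0 : 0 < S := lt_of_lt_of_le hθ0 hSa
  have hSα : S ≤ α := hS ▸ hfα
  have hKS : 0 < (K:ℝ) - S := by nlinarith
  have hkey : 1 / ((K:ℝ) - α) < θ / α := by
    rw [div_lt_div_iff₀ hKa hα0]
    nlinarith [(div_lt_iff₀ hKa).mp hθ]
  have hσ0 : 0 < σ := by rw [hσdef]; linarith
  rcases hr with hr | hr
  · -- r = 0
    have hha : h a = (1 - f a) / ((K:ℝ) - S) := by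
      rw [hh a, hr]; ring
    have h1 : h a ≤ 1 / ((K:ℝ) - α) := by
      rw [hha]
      apply div_le_div₀ (by positivity) (by linarith [(hf a).1]) hKa (by linarith)
    have hlt : h a < θ / α - σ := by
      rw [hσdef]; linarith
    rw [G, if_pos hlt, hr]
  · -- r = 1
    have hha : h a = f a / S := by
      rw [hh a, hr]; ring
    have hge : θ / α ≤ h a := by
      rw [hha]
      calc θ / α ≤ θ / S := div_le_div_of_nonneg_left (le_of_lt hθ0) hS0 hSα
      _ ≤ f a / S := by gcongr
    have hb : θ / α - σ + σ = θ / α := by ring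
    rw [G, if_neg (by push_neg; linarith), if_neg (by push_neg; rw [hb]; linarith), hr]
end

section
/- Let K be a positive integer and let p, h ∈ ℝ^K both lie in the probability simplex Δ_K (nonnegative entries summing to 1). Then Σ_{a=1}^K p_a · exp( −(1/2)·( ‖h − e_a‖₂² − ‖p − e_a‖₂² ) ) ≤ 1, where e_a is the a-th standard basis vector and ‖·‖₂ is the Euclidean norm. -/
/-!
Expanding the squares, the exponent for action `a` is `(h a - p a) - C` with
`C = (‖h‖² - ‖p‖²) / 2 = ⟪p, h - p⟫ + ‖h - p‖² / 2`. So the claim is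
`𝔼[exp Y] ≤ exp (𝔼 Y + ‖y‖² / 2)` for `Y = y A`, `y = h - p`, `A ∼ p`; since `|y a| ≤ ‖y‖`,
this is Hoeffding's lemma for a variable with values in `[-‖y‖, ‖y‖]`.
-/

open MeasureTheory ProbabilityTheory Real

namespace stdSimplex

variable {ι : Type*} [Fintype ι] {p : ι → ℝ}

noncomputable def toPMF (hp : p ∈ stdSimplex ℝ ι) : PMF ι :=
  PMF.ofFintype (fun i ↦ ENNReal.ofReal (p i)) <| by
    rw [← ENNReal.ofReal_sum_of_nonneg fun i _ ↦ hp.1 i, hp.2, ENNReal.ofReal_one]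

lemma integral_toPMF [MeasurableSpace ι] [MeasurableSingletonClass ι]
    (hp : p ∈ stdSimplex ℝ ι) (f : ι → ℝ) :
    ∫ i, f i ∂(toPMF hp).toMeasure = ∑ i, p i * f i := by
  simp [PMF.integral_eq_sum, toPMF, ENNReal.toReal_ofReal (hp.1 _)]

-- Hoeffding's lemma on a finite probability space.
theorem sum_mul_exp_le_of_mem_Icc (hp : p ∈ stdSimplex ℝ ι) {y : ι → ℝ} {a b : ℝ}
    (hy : ∀ i, y i ∈ Set.Icc a b) :
    ∑ i, p i * exp (y i) ≤ exp (∑ i, p i * y i + (b - a) ^ 2 / 8) := by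
  let _ : MeasurableSpace ι := ⊤
  have hoeffding := (hasSubgaussianMGF_of_mem_Icc (μ := (toPMF hp).toMeasure)
    (measurable_of_countable y).aemeasurable (ae_of_all _ hy)).mgf_le 1
  simp only [mgf, integral_toPMF] at hoeffding
  set m := ∑ i, p i * y i
  have h_mgf : ∑ i, p i * exp (1 * (y i - m)) = exp (-m) * ∑ i, p i * exp (y i) := by
    rw [Finset.mul_sum]
    congr! 1 with i
    rw [one_mul, sub_eq_add_neg, exp_add]
    ring
  have h_var : (((‖b - a‖₊ / 2) ^ 2 : NNReal) : ℝ) * 1 ^ 2 / 2 = (b - a) ^ 2 / 8 := by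
    push_cast
    rw [norm_eq_abs, div_pow, sq_abs]
    ring
  rw [h_mgf, h_var] at hoeffding
  calc ∑ i, p i * exp (y i) = exp m * (exp (-m) * ∑ i, p i * exp (y i)) := by
        rw [← mul_assoc, ← exp_add, add_neg_cancel, exp_zero, one_mul]
    _ ≤ exp m * exp ((b - a) ^ 2 / 8) := by gcongr
    _ = exp (m + (b - a) ^ 2 / 8) := (exp_add _ _).symm

theorem sum_mul_exp_le_exp_add_sum_sq (hp : p ∈ stdSimplex ℝ ι) (y : ι → ℝ) :
    ∑ i, p i * exp (y i) ≤ exp (∑ i, p i * y i + (∑ i, y i ^ 2) / 2) := by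
  set s := ∑ i, y i ^ 2
  have hy : ∀ i, y i ∈ Set.Icc (-√s) √s := fun i ↦
    abs_le.mp <| abs_le_sqrt <|
      Finset.single_le_sum (fun j _ ↦ sq_nonneg (y j)) (Finset.mem_univ i)
  convert sum_mul_exp_le_of_mem_Icc hp hy using 3
  rw [sub_neg_eq_add, ← two_mul, mul_pow, sq_sqrt (by positivity)]
  ring

end stdSimplex

lemma sum_sub_ite_sq {ι : Type*} [Fintype ι] [DecidableEq ι] (f : ι → ℝ) (a : ι) :
    ∑ i, (f i - if i = a then 1 else 0) ^ 2 = ∑ i, f i ^ 2 - 2 * f a + 1 := by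
  simp [sub_sq, Finset.sum_add_distrib, Finset.sum_sub_distrib, mul_ite]

theorem stmt_6_general (K : ℕ) (p h : Fin K → ℝ)
    (hp : p ∈ stdSimplex ℝ (Fin K)) :
    ∑ a : Fin K, p a * Real.exp (-(1 / 2) *
        ((∑ i : Fin K, (h i - (if i = a then 1 else 0)) ^ 2) -
          ∑ i : Fin K, (p i - (if i = a then 1 else 0)) ^ 2)) ≤ 1 := by
  set C := (∑ i, h i ^ 2 - ∑ i, p i ^ 2) / 2
  have h_exponent : ∀ a, -(1 / 2) * ((∑ i, (h i - if i = a then 1 else 0) ^ 2) -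
      ∑ i, (p i - if i = a then 1 else 0) ^ 2) = (h a - p a) + -C := fun a ↦ by
    rw [sum_sub_ite_sq, sum_sub_ite_sq]
    ring
  have h_C : ∑ i, p i * (h - p) i + (∑ i, (h - p) i ^ 2) / 2 = C := by
    simp only [C, Finset.sum_div, ← Finset.sum_sub_distrib, ← Finset.sum_add_distrib]
    exact Finset.sum_congr rfl fun i _ ↦ by simp only [Pi.sub_apply]; ring
  calc _ = (∑ a, p a * exp ((h - p) a)) * exp (-C) := by
        simp_rw [h_exponent, exp_add, Finset.sum_mul, mul_assoc, Pi.sub_apply]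
    _ ≤ exp C * exp (-C) := by
        gcongr
        simpa only [h_C] using stdSimplex.sum_mul_exp_le_exp_add_sum_sq hp (h - p)
    _ = 1 := by rw [← exp_add, add_neg_cancel, exp_zero]

/-- **Strong 1/2-central condition for the vector squared loss (Eq. (10) in Lemma 3's proof).**
Here `e a` is the `a`-th standard basis vector, and squared Euclidean norms are written as
sums of squares. -/
theorem stmt_6 (K : ℕ) (hK : 0 < K) (p h : Fin K → ℝ)
    (hp : p ∈ stdSimplex ℝ (Fin K)) (hh : h ∈ stdSimplex ℝ (Fin K)) :
    ∑ a : Fin K, p a * Real.exp (-(1 / 2) *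
        ((∑ i : Fin K, (h i - (if i = a then 1 else 0)) ^ 2) -
          ∑ i : Fin K, (p i - (if i = a then 1 else 0)) ^ 2)) ≤ 1 :=
  stmt_6_general K p h hp
end

section
/- Let K be a positive integer, let p, h ∈ ℝ^K both lie in the probability simplex Δ_K (nonnegative entries summing to 1), and let λ ∈ ℝ. Then Σ_{a=1}^K p_a · exp( λ·⟨h − p, p − e_a⟩ ) ≤ exp( λ²·‖h − p‖₂²/2 ), where e_a is the a-th standard basis vector, ⟨·,·⟩ is the Euclidean inner product and ‖·‖₂ the Euclidean norm. -/
/-!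
Writing `x = h - p`, the exponent is `λ (⟨x, p⟩ - x_a)`: a random variable of mean zero under
`a ∼ p` whose values lie in an interval of length `2 ‖x‖₂`, since `|x_a| ≤ ‖x‖₂`.
Hoeffding's lemma then bounds its moment generating function by `exp (λ² ‖x‖₂² / 2)`.
-/

open Real MeasureTheory ProbabilityTheory

/-- Hoeffding's lemma for a finitely supported distribution given by weights `w`. -/
theorem sum_mul_exp_mul_le_of_mem_Icc {ι : Type*} [Fintype ι] {w Y : ι → ℝ} {a b : ℝ}
    (hw : ∀ i, 0 ≤ w i) (hw1 : ∑ i, w i = 1) (hY : ∀ i, Y i ∈ Set.Icc a b)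
    (hmean : ∑ i, w i * Y i = 0) (t : ℝ) :
    ∑ i, w i * exp (t * Y i) ≤ exp (((b - a) / 2) ^ 2 * t ^ 2 / 2) := by
  let _ : MeasurableSpace ι := ⊤
  have : MeasurableSingletonClass ι := ⟨fun _ => trivial⟩
  let P : PMF ι := PMF.ofFintype (fun i => ENNReal.ofReal (w i)) <| by
    rw [← ENNReal.ofReal_sum_of_nonneg fun i _ => hw i, hw1, ENNReal.ofReal_one]
  have integral_P (f : ι → ℝ) : ∫ i, f i ∂P.toMeasure = ∑ i, w i * f i := by
    simp [PMF.integral_eq_sum, P, ENNReal.toReal_ofReal (hw _)]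
  have hoeffding := (hasSubgaussianMGF_of_mem_Icc_of_integral_eq_zero (μ := P.toMeasure)
    (measurable_of_finite Y).aemeasurable (ae_of_all _ hY)
    (by rw [integral_P]; exact hmean)).mgf_le t
  rw [mgf, integral_P] at hoeffding
  convert hoeffding using 4
  simp [div_pow, sq_abs, sub_sq_comm]

theorem sum_mul_sub_indicator {ι : Type*} [Fintype ι] [DecidableEq ι] (x q : ι → ℝ) (a : ι) :
    ∑ i, x i * (q i - if i = a then 1 else 0) = ∑ i, x i * q i - x a := by
  simp [mul_sub, Finset.sum_sub_distrib, mul_ite]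

theorem abs_le_sqrt_sum_sq {ι : Type*} [Fintype ι] (x : ι → ℝ) (a : ι) :
    |x a| ≤ √(∑ i, x i ^ 2) := by
  rw [← sqrt_sq_eq_abs]
  exact sqrt_le_sqrt (Finset.single_le_sum (fun i _ => sq_nonneg (x i)) (Finset.mem_univ a))

theorem stmt_7_general (K : ℕ) (p h : Fin K → ℝ)
    (hp : p ∈ stdSimplex ℝ (Fin K)) (lam : ℝ) :
    ∑ a : Fin K, p a * Real.exp (lam *
        ∑ i : Fin K, (h i - p i) * (p i - (if i = a then 1 else 0))) ≤
      Real.exp (lam ^ 2 * (∑ i : Fin K, (h i - p i) ^ 2) / 2) := by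
  obtain ⟨hp0, hp1⟩ := hp
  set x : Fin K → ℝ := fun i => h i - p i
  set c := ∑ i, x i * p i
  set σ := √(∑ i, x i ^ 2)
  have hmean : ∑ a, p a * (c - x a) = 0 := by
    simp only [mul_sub, Finset.sum_sub_distrib, ← Finset.sum_mul, hp1, c, mul_comm (x _)]
    ring
  have hY (a : Fin K) : c - x a ∈ Set.Icc (c - σ) (c + σ) := by
    have := abs_le_sqrt_sum_sq x a
    constructor <;> linarith [abs_le.mp this]
  have hσ : ((c + σ - (c - σ)) / 2) ^ 2 = ∑ i, x i ^ 2 := by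
    rw [show (c + σ - (c - σ)) / 2 = σ by ring]
    exact sq_sqrt (Finset.sum_nonneg fun i _ => sq_nonneg (x i))
  simp_rw [sum_mul_sub_indicator]
  calc _ ≤ exp (((c + σ - (c - σ)) / 2) ^ 2 * lam ^ 2 / 2) :=
        sum_mul_exp_mul_le_of_mem_Icc hp0 hp1 hY hmean lam
    _ = _ := by rw [hσ, mul_comm]

/-- **Sub-Gaussianity claim in the proof of Lemma 3.** For `a` drawn from `p`, the zero-mean
random variable `⟨h − p, p − e_a⟩` is `‖h − p‖₂²`-sub-Gaussian. Here `e a` is the `a`-th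
standard basis vector; inner products and squared norms are written as sums. -/
theorem stmt_7 (K : ℕ) (hK : 0 < K) (p h : Fin K → ℝ)
    (hp : p ∈ stdSimplex ℝ (Fin K)) (hh : h ∈ stdSimplex ℝ (Fin K)) (lam : ℝ) :
    ∑ a : Fin K, p a * Real.exp (lam *
        ∑ i : Fin K, (h i - p i) * (p i - (if i = a then 1 else 0))) ≤
      Real.exp (lam ^ 2 * (∑ i : Fin K, (h i - p i) ^ 2) / 2) :=
  stmt_7_general K p h hp lam
end

section
/- There exists a universal constant C > 0 such that the following holds. Let K ≥ 1 be an integer, (X, 𝒜) and (Y, ℬ) measurable spaces, and μ a probability measure on X × Fin K × Y. Let H be a finite nonempty set of measurable functions from X × Y into the probability simplex Δ_K ⊆ ℝ^K, and suppose there is h* ∈ H such that the conditional expectation of e_A given (X, Y) under μ equals h*(X, Y) almost surely (here (X, A, Y) denotes the identity random element on X × Fin K × Y and e_A the A-th standard basis vector). Let N ≥ 1, let Z₁, …, Z_N be i.i.d. with law μ, and let ĥ be any H-valued random function minimizing Σ_{i=1}^N ‖h(x_i, y_i) − e_{a_i}‖₂² over h ∈ H (where Z_i = (x_i, a_i, y_i)).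 Then for every δ ∈ (0,1), with probability at least 1 − δ: E_{(x,a,y)∼μ}[ ‖ĥ(x,y) − e_a‖₂² − ‖h*(x,y) − e_a‖₂² ] ≤ C·log(|H|/δ)/N, where the expectation is taken over a fresh draw from μ with ĥ fixed. -/
/-!
Write `ℓ_h = ‖h − e_A‖² − ‖h* − e_A‖²` for the excess loss of `h`. Well-specification makes the
cross term `2⟨h − h*, h* − e_A⟩` vanish in expectation, so `E ℓ_h = E ‖h − h*‖²`; on the simplex,
Cauchy–Schwarz gives `ℓ_h² ≤ 8 ‖h − h*‖²`, hence `E ℓ_h² ≤ 8 E ℓ_h`, and `|ℓ_h| ≤ 2`. For such a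
variable the moment generating function at `-1/12` is at most `exp (-E ℓ_h / 36)`, so the
empirical excess loss of a fixed `h` with `E ℓ_h > ε` is `≤ 0` with probability at most
`exp (-N ε / 36)`. The empirical risk minimiser has nonpositive empirical excess loss, and a union
bound over the at most `|H|` bad hypotheses, with `ε = 36 log (|H| / δ) / N`, finishes the proof.
-/

open MeasureTheory ProbabilityTheory Real
open scoped ENNReal

section Simplex

variable {ι : Type*} [Fintype ι]

lemma abs_sub_le_one_of_mem_stdSimplex {v w : ι → ℝ} (hv : v ∈ stdSimplex ℝ ι)
    (hw : w ∈ stdSimplex ℝ ι) (k : ι) : |v k - w k| ≤ 1 := by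
  obtain ⟨hv0, hv1⟩ := mem_Icc_of_mem_stdSimplex hv k
  obtain ⟨hw0, hw1⟩ := mem_Icc_of_mem_stdSimplex hw k
  rw [abs_sub_le_iff]
  constructor <;> linarith

lemma sum_sq_sub_le_two {v w : ι → ℝ} (hv : v ∈ stdSimplex ℝ ι) (hw : w ∈ stdSimplex ℝ ι) :
    ∑ k, (v k - w k) ^ 2 ≤ 2 :=
  calc ∑ k, (v k - w k) ^ 2 ≤ ∑ k, (v k + w k) := Finset.sum_le_sum fun k _ => by
        obtain ⟨hv0, hv1⟩ := mem_Icc_of_mem_stdSimplex hv k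
        obtain ⟨hw0, hw1⟩ := mem_Icc_of_mem_stdSimplex hw k
        nlinarith
    _ = 2 := by rw [Finset.sum_add_distrib, hv.2, hw.2]; norm_num

lemma sq_sum_sq_sub_sub_sum_sq_sub_le {u v w : ι → ℝ} (hu : u ∈ stdSimplex ℝ ι)
    (hv : v ∈ stdSimplex ℝ ι) (hw : w ∈ stdSimplex ℝ ι) :
    (∑ k, (u k - w k) ^ 2 - ∑ k, (v k - w k) ^ 2) ^ 2 ≤ 8 * ∑ k, (u k - v k) ^ 2 := by
  have hdiff : ∑ k, (u k - w k) ^ 2 - ∑ k, (v k - w k) ^ 2 =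
      ∑ k, (u k - v k) * ((u k - w k) + (v k - w k)) := by
    rw [← Finset.sum_sub_distrib]
    exact Finset.sum_congr rfl fun k _ => by ring
  have hsum : ∑ k, ((u k - w k) + (v k - w k)) ^ 2 ≤ 8 :=
    calc ∑ k, ((u k - w k) + (v k - w k)) ^ 2
        ≤ ∑ k, (2 * (u k - w k) ^ 2 + 2 * (v k - w k) ^ 2) :=
          Finset.sum_le_sum fun k _ => by nlinarith [sq_nonneg (u k - v k)]
      _ = 2 * ∑ k, (u k - w k) ^ 2 + 2 * ∑ k, (v k - w k) ^ 2 := by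
          rw [Finset.sum_add_distrib, ← Finset.mul_sum, ← Finset.mul_sum]
      _ ≤ 8 := by linarith [sum_sq_sub_le_two hu hw, sum_sq_sub_le_two hv hw]
  calc (∑ k, (u k - w k) ^ 2 - ∑ k, (v k - w k) ^ 2) ^ 2
      = (∑ k, (u k - v k) * ((u k - w k) + (v k - w k))) ^ 2 := by rw [hdiff]
    _ ≤ (∑ k, (u k - v k) ^ 2) * ∑ k, ((u k - w k) + (v k - w k)) ^ 2 :=
        Finset.sum_mul_sq_le_sq_mul_sq _ _ _
    _ ≤ (∑ k, (u k - v k) ^ 2) * 8 :=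
        mul_le_mul_of_nonneg_left hsum (Finset.sum_nonneg fun _ _ => sq_nonneg _)
    _ = 8 * ∑ k, (u k - v k) ^ 2 := mul_comm _ _

variable [DecidableEq ι]

def sqLoss (v : ι → ℝ) (a : ι) : ℝ := ∑ k, (v k - if a = k then 1 else 0) ^ 2

lemma sqLoss_nonneg (v : ι → ℝ) (a : ι) : 0 ≤ sqLoss v a :=
  Finset.sum_nonneg fun _ _ => sq_nonneg _

lemma sqLoss_le_two {v : ι → ℝ} (hv : v ∈ stdSimplex ℝ ι) (a : ι) : sqLoss v a ≤ 2 :=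
  sum_sq_sub_le_two hv (ite_eq_mem_stdSimplex ℝ a)

lemma abs_sqLoss_sub_sqLoss_le_two {u v : ι → ℝ} (hu : u ∈ stdSimplex ℝ ι)
    (hv : v ∈ stdSimplex ℝ ι) (a : ι) : |sqLoss u a - sqLoss v a| ≤ 2 := by
  rw [abs_sub_le_iff]
  constructor <;> linarith [sqLoss_le_two hu a, sqLoss_le_two hv a, sqLoss_nonneg u a,
    sqLoss_nonneg v a]

lemma sq_sqLoss_sub_sqLoss_le {u v : ι → ℝ} (hu : u ∈ stdSimplex ℝ ι)
    (hv : v ∈ stdSimplex ℝ ι) (a : ι) :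
    (sqLoss u a - sqLoss v a) ^ 2 ≤ 8 * ∑ k, (u k - v k) ^ 2 :=
  sq_sum_sq_sub_sub_sum_sq_sub_le hu hv (ite_eq_mem_stdSimplex ℝ a)

end Simplex

section Chernoff

lemma exp_le_one_add_add_sq {x : ℝ} (hx : |x| ≤ 1) : exp x ≤ 1 + x + x ^ 2 := by
  have h := (abs_le.mp (Real.exp_bound hx (n := 2) (by norm_num))).2
  simp only [Finset.sum_range_succ, Finset.sum_range_zero, sq_abs] at h
  norm_num at h
  nlinarith [sq_nonneg x]

variable {Z : Type*} [MeasurableSpace Z] {μ : Measure Z}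

lemma integrable_of_abs_le [IsFiniteMeasure μ] {f : Z → ℝ} (hf : Measurable f) {c : ℝ}
    (hc : ∀ z, |f z| ≤ c) : Integrable f μ :=
  Integrable.of_bound hf.aestronglyMeasurable c (ae_of_all _ hc)

lemma integrable_exp_mul_of_abs_le [IsFiniteMeasure μ] {f : Z → ℝ} (hf : Measurable f) {c : ℝ}
    (hc : ∀ z, |f z| ≤ c) (t : ℝ) : Integrable (fun z => exp (t * f z)) μ :=
  integrable_of_abs_le (by fun_prop) (c := exp (|t| * c)) fun z => by
    rw [abs_of_pos (exp_pos _), exp_le_exp]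
    calc t * f z ≤ |t * f z| := le_abs_self _
      _ = |t| * |f z| := abs_mul _ _
      _ ≤ |t| * c := mul_le_mul_of_nonneg_left (hc z) (abs_nonneg t)

lemma mgf_pi_sum {ι : Type*} [Fintype ι] [SigmaFinite μ] (f : Z → ℝ) (t : ℝ) :
    mgf (fun ω : ι → Z => ∑ i, f (ω i)) (Measure.pi fun _ => μ) t = mgf f μ t ^ Fintype.card ι := by
  simp only [mgf, Finset.mul_sum, Real.exp_sum]
  exact integral_fintype_prod_eq_pow (μ := μ) fun z => exp (t * f z)

lemma mgf_neg_inv_twelve_le [IsProbabilityMeasure μ] {f : Z → ℝ} (hf : Measurable f)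
    (hb : ∀ z, |f z| ≤ 2) (hvar : ∫ z, f z ^ 2 ∂μ ≤ 8 * ∫ z, f z ∂μ) :
    mgf f μ (-1 / 12) ≤ exp (-(∫ z, f z ∂μ) / 36) := by
  have hf_int : Integrable f μ := integrable_of_abs_le hf hb
  have hf2_int : Integrable (fun z => f z ^ 2) μ :=
    integrable_of_abs_le (hf.pow_const 2) (c := 4) fun z => by
      rw [abs_pow]; nlinarith [hb z, abs_nonneg (f z)]
  have h1_int : Integrable (fun z => 1 + -1 / 12 * f z) μ :=
    (integrable_const 1).add (hf_int.const_mul _)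
  have hpt : ∀ z, exp (-1 / 12 * f z) ≤ 1 + -1 / 12 * f z + 1 / 144 * f z ^ 2 := fun z => by
    have := exp_le_one_add_add_sq (x := -1 / 12 * f z) (by
      rw [abs_mul]; norm_num; linarith [hb z])
    linarith
  calc mgf f μ (-1 / 12)
      ≤ ∫ z, (1 + -1 / 12 * f z + 1 / 144 * f z ^ 2) ∂μ :=
        integral_mono (integrable_exp_mul_of_abs_le hf hb _) (h1_int.add (hf2_int.const_mul _))
          hpt
    _ = 1 + -1 / 12 * ∫ z, f z ∂μ + 1 / 144 * ∫ z, f z ^ 2 ∂μ := by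
        rw [integral_add h1_int (hf2_int.const_mul _),
          integral_add (integrable_const 1) (hf_int.const_mul _), integral_const_mul,
          integral_const_mul]
        simp
    _ ≤ 1 + -(∫ z, f z ∂μ) / 36 := by linarith
    _ ≤ exp (-(∫ z, f z ∂μ) / 36) := by linarith [add_one_le_exp (-(∫ z, f z ∂μ) / 36)]

lemma measure_pi_sum_nonpos_le [IsProbabilityMeasure μ] {f : Z → ℝ} (hf : Measurable f)
    (hb : ∀ z, |f z| ≤ 2) (hvar : ∫ z, f z ^ 2 ∂μ ≤ 8 * ∫ z, f z ∂μ) (N : ℕ) :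
    Measure.pi (fun _ : Fin N => μ) {ω | ∑ i, f (ω i) ≤ 0} ≤
      ENNReal.ofReal (exp (-(N * ∫ z, f z ∂μ) / 36)) := by
  have hint : Integrable (fun ω : Fin N → Z => exp (-1 / 12 * ∑ i, f (ω i)))
      (Measure.pi fun _ => μ) := by
    simp only [Finset.mul_sum, Real.exp_sum]
    exact Integrable.fintype_prod (f := fun _ z => exp (-1 / 12 * f z)) fun _ =>
      integrable_exp_mul_of_abs_le hf hb _
  have hchernoff := measure_le_le_exp_mul_mgf 0 (by norm_num) hint
  rw [mgf_pi_sum, Fintype.card_fin, mul_zero, exp_zero, one_mul] at hchernoff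
  rw [← ofReal_measureReal]
  refine ENNReal.ofReal_le_ofReal (hchernoff.trans ?_)
  calc mgf f μ (-1 / 12) ^ N ≤ exp (-(∫ z, f z ∂μ) / 36) ^ N :=
        pow_le_pow_left₀ mgf_nonneg (mgf_neg_inv_twelve_le hf hb hvar) N
    _ = exp (-(N * ∫ z, f z ∂μ) / 36) := by rw [← exp_nat_mul]; ring_nf

end Chernoff

theorem integral_mul_eq_of_condExp_ae_eq {Ω : Type*} {m m₀ : MeasurableSpace Ω}
    {μ : Measure Ω} [IsFiniteMeasure μ] (hm : m ≤ m₀) {f g p : Ω → ℝ}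
    (hg : StronglyMeasurable[m] g) {c : ℝ} (hgc : ∀ᵐ ω ∂μ, ‖g ω‖ ≤ c) (hf : Integrable f μ)
    (hfp : μ[f | m] =ᵐ[μ] p) :
    ∫ ω, g ω * f ω ∂μ = ∫ ω, g ω * p ω ∂μ :=
  calc ∫ ω, g ω * f ω ∂μ = ∫ ω, (μ[g * f | m]) ω ∂μ := (integral_condExp hm).symm
    _ = ∫ ω, (g * μ[f | m]) ω ∂μ :=
        integral_congr_ae (condExp_stronglyMeasurable_mul_of_bound hm hg hf c hgc)
    _ = ∫ ω, g ω * p ω ∂μ := integral_congr_ae (hfp.mono fun ω h => by simp [h])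

lemma measure_setOf_lt_comp_le_ncard_mul {Ω α : Type*} [MeasurableSpace Ω] (P : Measure Ω)
    {H : Set α} (hH : H.Finite) {hhat : Ω → α} (hmem : ∀ ω, hhat ω ∈ H) {E : α → Set Ω}
    (hE : ∀ ω, ω ∈ E (hhat ω)) {R : α → ℝ} {ε : ℝ} {η : ℝ≥0∞}
    (hη : ∀ h ∈ H, ε < R h → P (E h) ≤ η) :
    P {ω | ε < R (hhat ω)} ≤ H.ncard * η := by
  classical
  set T := hH.toFinset.filter fun h => ε < R h
  calc P {ω | ε < R (hhat ω)} ≤ P (⋃ h ∈ T, E h) := measure_mono fun ω hω =>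
        Set.mem_biUnion (Finset.mem_filter.2 ⟨hH.mem_toFinset.2 (hmem ω), hω⟩) (hE ω)
    _ ≤ ∑ h ∈ T, P (E h) := measure_biUnion_finset_le T E
    _ ≤ ∑ _h ∈ T, η := Finset.sum_le_sum fun h hT => by
        obtain ⟨hHT, hR⟩ := Finset.mem_filter.1 hT
        exact hη h (hH.mem_toFinset.1 hHT) hR
    _ = T.card * η := by rw [Finset.sum_const, nsmul_eq_mul]
    _ ≤ H.ncard * η := by
        gcongr
        rw [Set.ncard_eq_toFinset_card H hH]
        exact_mod_cast Finset.card_filter_le _ _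

lemma ofReal_one_sub_le_of_measure_compl_le {Ω : Type*} [MeasurableSpace Ω] {P : Measure Ω}
    [IsProbabilityMeasure P] {s : Set Ω} {δ : ℝ} (hδ : 0 ≤ δ) (h : P sᶜ ≤ ENNReal.ofReal δ) :
    ENNReal.ofReal (1 - δ) ≤ P s := by
  have hcover := measure_univ_le_add_compl (μ := P) s
  rw [measure_univ] at hcover
  rw [ENNReal.ofReal_sub _ hδ, ENNReal.ofReal_one]
  exact tsub_le_iff_right.2 (hcover.trans (add_le_add_right h _))

section ExcessLoss

variable {X Y ι : Type*} [MeasurableSpace X] [MeasurableSpace Y] [MeasurableSpace ι]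
  {μ : Measure (X × ι × Y)} {h hstar : X × Y → ι → ℝ}

lemma integrable_sum_sq_sub [Fintype ι] [IsFiniteMeasure μ] (hh : Measurable h) (hs : Measurable hstar)
    (hhΔ : ∀ p, h p ∈ stdSimplex ℝ ι) (hsΔ : ∀ p, hstar p ∈ stdSimplex ℝ ι) :
    Integrable (fun z : X × ι × Y => ∑ k, (h (z.1, z.2.2) k - hstar (z.1, z.2.2) k) ^ 2) μ :=
  integrable_of_abs_le (by fun_prop) (c := 2) fun z => by
    rw [abs_of_nonneg (Finset.sum_nonneg fun _ _ => sq_nonneg _)]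
    exact sum_sq_sub_le_two (hhΔ _) (hsΔ _)

variable [DecidableEq ι] [MeasurableSingletonClass ι]

lemma measurable_indicator_label (k : ι) :
    Measurable fun z : X × ι × Y => if z.2.1 = k then (1 : ℝ) else 0 :=
  Measurable.ite (measurable_snd.fst (measurableSet_singleton k)) measurable_const
    measurable_const

def IsRegressionFunction (μ : Measure (X × ι × Y)) (hstar : X × Y → ι → ℝ) : Prop :=
  ∀ k, μ[fun z => if z.2.1 = k then (1 : ℝ) else 0 |
      MeasurableSpace.comap (fun z : X × ι × Y => (z.1, z.2.2)) inferInstance] =ᵐ[μ]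
    fun z => hstar (z.1, z.2.2) k

lemma integral_mul_sub_regression_eq_zero [IsFiniteMeasure μ]
    (hreg : IsRegressionFunction μ hstar) {g : X × Y → ℝ} (hg : Measurable g) {c : ℝ}
    (hgc : ∀ p, |g p| ≤ c) (k : ι) :
    ∫ z, g (z.1, z.2.2) * (hstar (z.1, z.2.2) k - if z.2.1 = k then 1 else 0) ∂μ = 0 := by
  have hπ : Measurable fun z : X × ι × Y => (z.1, z.2.2) := by fun_prop
  have hg_meas : StronglyMeasurable[MeasurableSpace.comap (fun z : X × ι × Y => (z.1, z.2.2))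
      inferInstance] fun z => g (z.1, z.2.2) :=
    (hg.comp (comap_measurable _)).stronglyMeasurable
  have hg_bdd : ∀ᵐ z ∂μ, ‖g (z.1, z.2.2)‖ ≤ c := ae_of_all _ fun z => hgc _
  have hind_int : Integrable (fun z : X × ι × Y => if z.2.1 = k then (1 : ℝ) else 0) μ :=
    integrable_of_abs_le (measurable_indicator_label k) (c := 1) fun z => by split_ifs <;> simp
  have hstar_int : Integrable (fun z => hstar (z.1, z.2.2) k) μ :=
    integrable_condExp.congr (hreg k)
  have hgπ : Measurable fun z : X × ι × Y => g (z.1, z.2.2) := hg.comp hπ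
  simp only [mul_sub]
  rw [integral_sub (hstar_int.bdd_mul hgπ.aestronglyMeasurable hg_bdd)
      (hind_int.bdd_mul hgπ.aestronglyMeasurable hg_bdd),
    ← integral_mul_eq_of_condExp_ae_eq hπ.comap_le hg_meas hg_bdd hind_int (hreg k), sub_self]

variable [Fintype ι]

def excessLoss (h hstar : X × Y → ι → ℝ) (z : X × ι × Y) : ℝ :=
  sqLoss (h (z.1, z.2.2)) z.2.1 - sqLoss (hstar (z.1, z.2.2)) z.2.1

lemma measurable_excessLoss (hh : Measurable h) (hs : Measurable hstar) :
    Measurable (excessLoss h hstar) := by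
  have hπ : Measurable fun z : X × ι × Y => (z.1, z.2.2) := by fun_prop
  unfold excessLoss sqLoss
  refine (Finset.measurable_sum _ fun k _ => ?_).sub (Finset.measurable_sum _ fun k _ => ?_)
  · exact ((measurable_pi_apply k |>.comp hh |>.comp hπ).sub
      (measurable_indicator_label k)).pow_const 2
  · exact ((measurable_pi_apply k |>.comp hs |>.comp hπ).sub
      (measurable_indicator_label k)).pow_const 2

lemma integral_excessLoss [IsFiniteMeasure μ] (hreg : IsRegressionFunction μ hstar)
    (hh : Measurable h) (hs : Measurable hstar) (hhΔ : ∀ p, h p ∈ stdSimplex ℝ ι)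
    (hsΔ : ∀ p, hstar p ∈ stdSimplex ℝ ι) :
    ∫ z, excessLoss h hstar z ∂μ =
      ∫ z, ∑ k, (h (z.1, z.2.2) k - hstar (z.1, z.2.2) k) ^ 2 ∂μ := by
  have hπ : Measurable fun z : X × ι × Y => (z.1, z.2.2) := by fun_prop
  have hd : ∀ k, Measurable fun p => h p k - hstar p k := fun k =>
    ((measurable_pi_apply k).comp hh).sub ((measurable_pi_apply k).comp hs)
  have hd_le : ∀ k p, |h p k - hstar p k| ≤ 1 := fun k p =>
    abs_sub_le_one_of_mem_stdSimplex (hhΔ p) (hsΔ p) k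
  have hcross : ∀ k, Integrable (fun z : X × ι × Y => (h (z.1, z.2.2) k - hstar (z.1, z.2.2) k) *
      (hstar (z.1, z.2.2) k - if z.2.1 = k then 1 else 0)) μ := fun k =>
    integrable_of_abs_le (((hd k).comp hπ).mul
      ((measurable_pi_apply k |>.comp hs |>.comp hπ).sub (measurable_indicator_label k)))
      (c := 1) fun z => by
        rw [abs_mul]
        exact mul_le_one₀ (hd_le k _) (abs_nonneg _)
          (abs_sub_le_one_of_mem_stdSimplex (hsΔ _) (ite_eq_mem_stdSimplex ℝ z.2.1) k)
  have hdecomp : excessLoss h hstar = fun z =>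
      ∑ k, (h (z.1, z.2.2) k - hstar (z.1, z.2.2) k) ^ 2 +
        2 * ∑ k, (h (z.1, z.2.2) k - hstar (z.1, z.2.2) k) *
          (hstar (z.1, z.2.2) k - if z.2.1 = k then 1 else 0) := by
    funext z
    simp only [excessLoss, sqLoss, Finset.mul_sum, ← Finset.sum_sub_distrib,
      ← Finset.sum_add_distrib]
    exact Finset.sum_congr rfl fun k _ => by ring
  rw [hdecomp, integral_add (integrable_sum_sq_sub hh hs hhΔ hsΔ)
      ((integrable_finsetSum _ fun k _ => hcross k).const_mul 2),
    integral_const_mul, integral_finsetSum _ fun k _ => hcross k,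
    Finset.sum_eq_zero fun k _ => integral_mul_sub_regression_eq_zero hreg (hd k) (hd_le k) k,
    mul_zero, add_zero]

lemma integral_sq_excessLoss_le [IsFiniteMeasure μ] (hreg : IsRegressionFunction μ hstar)
    (hh : Measurable h) (hs : Measurable hstar) (hhΔ : ∀ p, h p ∈ stdSimplex ℝ ι)
    (hsΔ : ∀ p, hstar p ∈ stdSimplex ℝ ι) :
    ∫ z, excessLoss h hstar z ^ 2 ∂μ ≤ 8 * ∫ z, excessLoss h hstar z ∂μ := by
  rw [integral_excessLoss hreg hh hs hhΔ hsΔ, ← integral_const_mul]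
  refine integral_mono ?_ ((integrable_sum_sq_sub hh hs hhΔ hsΔ).const_mul 8)
    fun z => sq_sqLoss_sub_sqLoss_le (hhΔ _) (hsΔ _) z.2.1
  refine integrable_of_abs_le ((measurable_excessLoss hh hs).pow_const 2) (c := 4) fun z => ?_
  have := abs_sqLoss_sub_sqLoss_le_two (hhΔ (z.1, z.2.2)) (hsΔ (z.1, z.2.2)) z.2.1
  rw [abs_pow]
  exact (pow_le_pow_left₀ (abs_nonneg _) this 2).trans_eq (by norm_num)

lemma measure_pi_sum_excessLoss_nonpos_le [IsProbabilityMeasure μ]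
    (hreg : IsRegressionFunction μ hstar) (hh : Measurable h) (hs : Measurable hstar)
    (hhΔ : ∀ p, h p ∈ stdSimplex ℝ ι) (hsΔ : ∀ p, hstar p ∈ stdSimplex ℝ ι) (N : ℕ) :
    Measure.pi (fun _ : Fin N => μ) {ω | ∑ i, excessLoss h hstar (ω i) ≤ 0} ≤
      ENNReal.ofReal (exp (-(N * ∫ z, excessLoss h hstar z ∂μ) / 36)) :=
  measure_pi_sum_nonpos_le (measurable_excessLoss hh hs)
    (fun z => abs_sqLoss_sub_sqLoss_le_two (hhΔ _) (hsΔ _) z.2.1)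
    (integral_sq_excessLoss_le hreg hh hs hhΔ hsΔ) N

end ExcessLoss

/-- **Eq. (6) of Lemma 3 (ERM generalization bound for the vector squared loss).**
The empirical risk minimizer over a finite well-specified class `H` of simplex-valued
functions has excess risk `O(log(|H|/δ)/N)` with probability `1 − δ`. The conditional
expectation of `e_A` given `(X, Y)` is expressed via `condexp` with respect to the
σ-algebra generated by `(X, Y)`. -/
theorem stmt_9 : ∃ C : ℝ, 0 < C ∧
    ∀ (K : ℕ), 1 ≤ K →
    ∀ (X Y : Type) (_ : MeasurableSpace X) (_ : MeasurableSpace Y)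
      (μ : Measure (X × Fin K × Y)), IsProbabilityMeasure μ →
    ∀ (H : Set (X × Y → Fin K → ℝ)), H.Finite → H.Nonempty →
      (∀ h ∈ H, Measurable h ∧ ∀ p, h p ∈ stdSimplex ℝ (Fin K)) →
    ∀ hstar ∈ H,
      (∀ k : Fin K,
        (μ[(fun z : X × Fin K × Y => if z.2.1 = k then (1 : ℝ) else 0) |
            MeasurableSpace.comap (fun z : X × Fin K × Y => (z.1, z.2.2)) inferInstance])
          =ᵐ[μ] fun z => hstar (z.1, z.2.2) k) →
    ∀ (N : ℕ), 1 ≤ N →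
    ∀ (hhat : (Fin N → X × Fin K × Y) → X × Y → Fin K → ℝ),
      (∀ ω, hhat ω ∈ H ∧ ∀ h ∈ H,
        (∑ i : Fin N, ∑ k : Fin K,
            (hhat ω ((ω i).1, (ω i).2.2) k - if (ω i).2.1 = k then (1 : ℝ) else 0) ^ 2) ≤
          ∑ i : Fin N, ∑ k : Fin K,
            (h ((ω i).1, (ω i).2.2) k - if (ω i).2.1 = k then (1 : ℝ) else 0) ^ 2) →
    ∀ δ : ℝ, 0 < δ → δ < 1 →
      ENNReal.ofReal (1 - δ) ≤
        Measure.pi (fun _ : Fin N => μ)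
          {ω | ∫ z, ((∑ k : Fin K,
                  (hhat ω (z.1, z.2.2) k - if z.2.1 = k then (1 : ℝ) else 0) ^ 2) -
                ∑ k : Fin K,
                  (hstar (z.1, z.2.2) k - if z.2.1 = k then (1 : ℝ) else 0) ^ 2) ∂μ ≤
            C * Real.log (H.ncard / δ) / N} := by
  refine ⟨36, by norm_num, ?_⟩
  intro K _ X Y _ _ μ _ H hH hne hHΔ hstar hstarH hreg N hN hhat herm δ hδ0 _
  set ε : ℝ := 36 * log (H.ncard / δ) / N with hε
  have hcard : (0 : ℝ) < H.ncard := by exact_mod_cast (Set.ncard_pos hH).2 hne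
  have hexp : exp (-(N * ε) / 36) = δ / H.ncard := by
    rw [hε, mul_div_cancel₀ _ (by positivity), neg_div, mul_div_cancel_left₀ _ (by norm_num),
      exp_neg, exp_log (by positivity), inv_div]
  have htail : ∀ h ∈ H, ε < ∫ z, excessLoss h hstar z ∂μ →
      Measure.pi (fun _ : Fin N => μ) {ω | ∑ i, excessLoss h hstar (ω i) ≤ 0} ≤
        ENNReal.ofReal (δ / H.ncard) := fun h hh hlt => by
    refine (measure_pi_sum_excessLoss_nonpos_le hreg (hHΔ h hh).1 (hHΔ hstar hstarH).1
      (hHΔ h hh).2 (hHΔ hstar hstarH).2 N).trans ?_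
    rw [← hexp]
    gcongr
  have hbad := measure_setOf_lt_comp_le_ncard_mul (Measure.pi fun _ : Fin N => μ) hH
    (fun ω => (herm ω).1) (E := fun h => {ω | ∑ i, excessLoss h hstar (ω i) ≤ 0})
    (fun ω => by
      simpa only [Set.mem_ofPred_eq, excessLoss, sqLoss, Finset.sum_sub_distrib, sub_nonpos]
        using (herm ω).2 hstar hstarH) htail
  rw [← ENNReal.ofReal_natCast, ← ENNReal.ofReal_mul hcard.le, mul_div_cancel₀ _ hcard.ne']
    at hbad
  change ENNReal.ofReal (1 - δ) ≤
    Measure.pi (fun _ : Fin N => μ) {ω | ∫ z, excessLoss (hhat ω) hstar z ∂μ ≤ ε}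
  refine ofReal_one_sub_le_of_measure_compl_le hδ0.le ?_
  simpa only [Set.compl_ofPred, not_le] using hbad
end

section
/- Fix an integer K ≥ 2 and reals α, θ with 0 < α < K/2 and θ > α/(K − α); set σ = (1/2)·(θ/α − 1/(K − α)). Let X and Y be nonempty countable types, D a probability mass function on X, and f* : X → Fin K → ℝ with 0 ≤ f*(x, a) ≤ 1, Σ_a f*(x, a) ≤ α, and max_a f*(x, a) ≥ θ for every x. For each x let q_{x,0}, q_{x,1} be probability mass functions on Y, and let φ* : X × Y → {0,1} satisfy φ*(x, y) = 1 for all y in the support of q_{x,1} and φ*(x, y) = 0 for all y in the support of q_{x,0}. Define h*_a(x, y) = f*(x, a)·φ*(x, y)/(Σ_{a'} f*(x, a')) + (1 − f*(x, a))·(1 − φ*(x, y))/(K − Σ_{a'} f*(x, a')). For a deterministic policy π : X → Fin K define V(π) = E_{x∼D}[ f*(x, π(x)) ] and W(π) = E_{x∼D}[ f*(x, π(x))·E_{y∼q_{x,1}}[ G(h*_{π(x)}(x, y), θ/α − σ, σ) ] + (1 − f*(x, π(x)))·E_{y∼q_{x,0}}[ G(h*_{π(x)}(x, y), θ/α − σ,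 σ) ] ], where G(v, β, σ) = 0 if v < β, G(v, β, σ) = (v − β)/σ if β ≤ v < β + σ, and G(v, β, σ) = 1 if v ≥ β + σ. Then W(π) ≤ V(π) for every policy π, and W(π) = V(π) for every policy π such that f*(x, π(x)) = max_a f*(x, a) for all x. -/
open scoped BigOperators

/-- **Population-level surrogate reward property (Eqs. (14) and (18)).** The expected
Lipschitz surrogate reward underestimates the expected true reward for every deterministic
policy and matches it for any greedy (optimal) policy. Feedback pmfs are `q x true`
(reward 1) and `q x false` (reward 0); `φstar` is the decoder and `hstar` the
inverse-kinematics function. -/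
theorem stmt_12 (K : ℕ) (hK : 2 ≤ K) (α θ : ℝ)
    (hα0 : 0 < α) (hαK : α < K / 2) (hθ : θ > α / (K - α))
    (σ : ℝ) (hσdef : σ = (1 / 2) * (θ / α - 1 / (K - α)))
    (X Y : Type*) [Countable X] [Countable Y] [Nonempty X] [Nonempty Y]
    (D : X → ℝ) (hD0 : ∀ x, 0 ≤ D x) (hD1 : ∑' x, D x = 1)
    (fstar : X → Fin K → ℝ) (hf01 : ∀ x a, 0 ≤ fstar x a ∧ fstar x a ≤ 1)
    (hfα : ∀ x, ∑ a, fstar x a ≤ α) (hfθ : ∀ x, ∃ a, θ ≤ fstar x a)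
    (q : X → Bool → Y → ℝ)
    (hq0 : ∀ x b y, 0 ≤ q x b y) (hq1 : ∀ x b, ∑' y, q x b y = 1)
    (φstar : X × Y → ℝ) (hφ01 : ∀ p, φstar p = 0 ∨ φstar p = 1)
    (hφ1 : ∀ x y, q x true y ≠ 0 → φstar (x, y) = 1)
    (hφ0 : ∀ x y, q x false y ≠ 0 → φstar (x, y) = 0)
    (hstar : X → Y → Fin K → ℝ)
    (hhstar : ∀ x y a, hstar x y a =
        fstar x a * φstar (x, y) / (∑ a', fstar x a') +
          (1 - fstar x a) * (1 - φstar (x, y)) / (K - ∑ a', fstar x a'))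
    (V W : (X → Fin K) → ℝ)
    (hV : ∀ π, V π = ∑' x, D x * fstar x (π x))
    (hW : ∀ π, W π = ∑' x, D x *
        (fstar x (π x) * (∑' y, q x true y * G (hstar x y (π x)) (θ / α - σ) σ) +
          (1 - fstar x (π x)) * (∑' y, q x false y * G (hstar x y (π x)) (θ / α - σ) σ))) :
    (∀ π : X → Fin K, W π ≤ V π) ∧
      (∀ π : X → Fin K, (∀ x a, fstar x a ≤ fstar x (π x)) → W π = V π) := by
  have hK2 : (2:ℝ) ≤ (K:ℝ) := by exact_mod_cast hK
  have hKα : 0 < (K:ℝ) - α := by nlinarith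
  have hθpos : 0 < θ := lt_trans (div_pos hα0 hKα) hθ
  have hθα : 1 / ((K:ℝ) - α) < θ / α := by
    have hθ' : α < θ * ((K:ℝ) - α) := by
      have h := hθ
      rw [gt_iff_lt, div_lt_iff₀ hKα] at h
      linarith
    rw [div_lt_div_iff₀ hKα hα0]
    linarith
  have hσpos : 0 < σ := by rw [hσdef]; linarith
  -- G bounds
  have hG01 : ∀ v, 0 ≤ G v (θ/α - σ) σ ∧ G v (θ/α - σ) σ ≤ 1 := by
    intro v
    unfold G
    split_ifs with h1 h2
    · norm_num
    · constructor
      · apply div_nonneg _ hσpos.le; linarith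
      · rw [div_le_one hσpos]; linarith
    · norm_num
  -- summabilities
  have sumq : ∀ x b, Summable (q x b) := by
    intro x b
    by_contra h
    have := hq1 x b
    rw [tsum_eq_zero_of_not_summable h] at this
    norm_num at this
  have sumD : Summable D := by
    by_contra h
    rw [tsum_eq_zero_of_not_summable h] at hD1
    norm_num at hD1
  have sumqG : ∀ x b (a : Fin K),
      Summable (fun y => q x b y * G (hstar x y a) (θ/α - σ) σ) := by
    intro x b a
    refine Summable.of_nonneg_of_le
      (fun y => mul_nonneg (hq0 x b y) (hG01 _).1)
      (fun y => mul_le_of_le_one_right (hq0 x b y) (hG01 _).2)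
      (sumq x b)
  -- false-side terms vanish
  have hfalse : ∀ x (a : Fin K) y, q x false y * G (hstar x y a) (θ/α - σ) σ = 0 := by
    intro x a y
    by_cases hq : q x false y = 0
    · rw [hq]; ring
    · have hφ := hφ0 x y hq
      have hv : hstar x y a = (1 - fstar x a) / ((K:ℝ) - ∑ a', fstar x a') := by
        rw [hhstar, hφ]; ring
      have h1 : (1 - fstar x a) / ((K:ℝ) - ∑ a', fstar x a') ≤ 1 / ((K:ℝ) - α) :=
        div_le_div₀ zero_le_one (by linarith [(hf01 x a).1]) hKα (by linarith [hfα x])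
      have hlt : hstar x y a < θ/α - σ := by
        rw [hv, hσdef]
        have := hfα x
        linarith
      unfold G
      rw [if_pos hlt, mul_zero]
  have hFalseTsum : ∀ x (a : Fin K),
      (∑' y, q x false y * G (hstar x y a) (θ/α - σ) σ) = 0 := by
    intro x a
    calc (∑' y, q x false y * G (hstar x y a) (θ/α - σ) σ)
        = ∑' _ : Y, (0:ℝ) := tsum_congr (fun y => hfalse x a y)
      _ = 0 := tsum_zero
  -- true-side tsum in [0,1]
  have hT01 : ∀ x (a : Fin K),
      0 ≤ (∑' y, q x true y * G (hstar x y a) (θ/α - σ) σ) ∧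
      (∑' y, q x true y * G (hstar x y a) (θ/α - σ) σ) ≤ 1 := by
    intro x a
    constructor
    · exact tsum_nonneg (fun y => mul_nonneg (hq0 x true y) (hG01 _).1)
    · calc (∑' y, q x true y * G (hstar x y a) (θ/α - σ) σ)
          ≤ ∑' y, q x true y :=
            Summable.tsum_le_tsum (fun y => mul_le_of_le_one_right (hq0 x true y) (hG01 _).2)
              (sumqG x true a) (sumq x true)
        _ = 1 := hq1 x true
  -- per-x inner expression
  set E : (X → Fin K) → X → ℝ := fun π x =>
    fstar x (π x) * (∑' y, q x true y * G (hstar x y (π x)) (θ / α - σ) σ) +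
      (1 - fstar x (π x)) * (∑' y, q x false y * G (hstar x y (π x)) (θ / α - σ) σ)
    with hE
  have hEeq : ∀ π x, E π x =
      fstar x (π x) * (∑' y, q x true y * G (hstar x y (π x)) (θ / α - σ) σ) := by
    intro π x
    rw [hE]
    dsimp only
    rw [hFalseTsum x (π x), mul_zero, add_zero]
  have hE0 : ∀ π x, 0 ≤ E π x := by
    intro π x
    rw [hEeq]
    exact mul_nonneg (hf01 x (π x)).1 (hT01 x (π x)).1
  have hEle : ∀ π x, E π x ≤ fstar x (π x) := by
    intro π x
    rw [hEeq]
    exact mul_le_of_le_one_right (hf01 x (π x)).1 (hT01 x (π x)).2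
  have sumRHS : ∀ π : X → Fin K, Summable (fun x => D x * fstar x (π x)) := by
    intro π
    refine Summable.of_nonneg_of_le
      (fun x => mul_nonneg (hD0 x) (hf01 x (π x)).1)
      (fun x => mul_le_of_le_one_right (hD0 x) (hf01 x (π x)).2) sumD
  have sumLHS : ∀ π : X → Fin K, Summable (fun x => D x * E π x) := by
    intro π
    refine Summable.of_nonneg_of_le
      (fun x => mul_nonneg (hD0 x) (hE0 π x))
      (fun x => mul_le_mul_of_nonneg_left (hEle π x) (hD0 x)) (sumRHS π)
  constructor
  · intro π
    rw [hW π, hV π]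
    exact Summable.tsum_le_tsum
      (fun x => mul_le_mul_of_nonneg_left (hEle π x) (hD0 x))
      (sumLHS π) (sumRHS π)
  · intro π hgreedy
    rw [hW π, hV π]
    refine tsum_congr (fun x => ?_)
    have hT1 : (∑' y, q x true y * G (hstar x y (π x)) (θ/α - σ) σ) = 1 := by
      have hterm : ∀ y, q x true y * G (hstar x y (π x)) (θ/α - σ) σ = q x true y := by
        intro y
        by_cases hq : q x true y = 0
        · rw [hq]; ring
        · have hφ := hφ1 x y hq
          obtain ⟨a, ha⟩ := hfθ x
          have hfθ' : θ ≤ fstar x (π x) := le_trans ha (hgreedy x a)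
          have hSθ : θ ≤ ∑ a', fstar x a' :=
            le_trans hfθ' (Finset.single_le_sum (fun a' _ => (hf01 x a').1)
              (Finset.mem_univ (π x)))
          have hSpos' : 0 < ∑ a', fstar x a' := lt_of_lt_of_le hθpos hSθ
          have hv : hstar x y (π x) = fstar x (π x) / (∑ a', fstar x a') := by
            rw [hhstar, hφ]; ring
          have hge : θ / α ≤ hstar x y (π x) := by
            rw [hv]
            exact div_le_div₀ (le_trans hθpos.le hfθ') hfθ' hSpos' (hfα x)
          unfold G
          rw [if_neg (by linarith), if_neg (by linarith), mul_one]
      calc (∑' y, q x true y * G (hstar x y (π x)) (θ/α - σ) σ)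
          = ∑' y, q x true y := tsum_congr hterm
        _ = 1 := hq1 x true
    have : E π x = fstar x (π x) := by rw [hEeq, hT1, mul_one]
    rw [hE] at this
    dsimp only at this
    rw [this]
end
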